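/- (Convergence rate, Theorem A.4.) Let D(F) be convex, let y ∈ Y, and let x† be an x*-S-minimum-norm solution with x* = 0 a.e. on Ω∖S. Assume: F is Fréchet differentiable; there exist γ ≥ 0 and ρ > 2‖x† − x*‖_{L²} such that ‖F'(x†) − F'(x)‖ ≤ γ‖x† − x‖_{L²} for all x ∈ D(F) with ‖x − x†‖_{L²} < ρ; there exists ω ∈ Y with x† − x* = F'(x†)*ω; and γ‖ω‖_Y < 1. Then, with the parameter choice α(δ) = δ, there exist constants C > 0 and δ₀ > 0 such that for every 0 < δ ≤ δ₀, every y^δ ∈ Y with ‖y − y^δ‖_Y ≤ δ, and every minimizer x^δ of J_{δ,S,y^δ} over D(F): ‖x^δ − x†‖_{S⁺} ≤ C√δ, ‖x^δ − x†‖_{S⁻} ≤ Cδ, and ‖F(x^δ) − y‖_Y ≤ Cδ. -/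

import Mathlib

/-!
Write `w = x† − x*`, which vanishes off `S`, and `v = x^δ − x†`. Comparing `J` at `x^δ` with its
value at `x†` gives `‖F x^δ − y^δ‖² + δ‖v‖²_{S⁺} + ‖v‖²_{S⁻} + 2δ⟪v, w⟫ ≤ δ²`. With Cauchy–Schwarz
this bounds `‖v‖ ≤ 2‖w‖ + √δ < ρ`, so the Lipschitz bound on `F'` along the segment `[x†, x^δ]`
controls the linearization error by `γ/2 ‖v‖²`. The source condition turns `⟪v, w⟫` into
`⟪ω, F'(x†) v⟫`, hence bounds `−⟪v, w⟫` by `‖ω‖ (‖F x^δ − y‖ + γ/2 ‖v‖²)`; since `γ‖ω‖ < 1` the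
quadratic term is absorbed on the left, and completing the square in `‖F x^δ − y^δ‖` leaves the
three rates.
-/

open MeasureTheory Filter
open scoped RealInnerProductSpace ENNReal Topology

noncomputable section

/-- Weak sequential convergence in a real inner product space. -/
def WeakConv {H : Type*} [NormedAddCommGroup H] [InnerProductSpace ℝ H]
    (u : ℕ → H) (x : H) : Prop :=
  ∀ z : H, Tendsto (fun k => ⟪u k, z⟫) atTop (𝓝 ⟪x, z⟫)

/-- The squared `L²` mass of (a representative of) `x : L²(Ω)` over the set `T`. -/
def sqInt {n : ℕ} (Ω : Set (Fin n → ℝ)) (T : Set (Fin n → ℝ))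
    (x : Lp ℝ 2 (volume.restrict Ω)) : ℝ :=
  ∫ t in T, (x t) ^ 2 ∂(volume.restrict Ω)

/-- The Tikhonov-type functional
`J_{α,S,z}(x) = ‖F(x) − z‖² + α‖x − x*‖_{S⁺}² + ‖x − x*‖_{S⁻}²`. -/
def J {n : ℕ} (Ω : Set (Fin n → ℝ)) {Y : Type*} [NormedAddCommGroup Y]
    [InnerProductSpace ℝ Y]
    (F : Lp ℝ 2 (volume.restrict Ω) → Y) (xstar : Lp ℝ 2 (volume.restrict Ω))
    (α : ℝ) (S : Set (Fin n → ℝ)) (z : Y) (x : Lp ℝ 2 (volume.restrict Ω)) : ℝ :=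
  ‖F x - z‖ ^ 2 + (α * sqInt Ω S (x - xstar) + sqInt Ω (Ω \ S) (x - xstar))

/-- `x` is a minimizer of the functional `Jf` over the set `D`. -/
def IsMinimizer {X' : Type*} (Jf : X' → ℝ) (D : Set X') (x : X') : Prop :=
  x ∈ D ∧ ∀ x' ∈ D, Jf x ≤ Jf x'

/-- `x = 0` almost everywhere on `Ω ∖ S`. -/
def ZeroOff {n : ℕ} (Ω S : Set (Fin n → ℝ))
    (x : Lp ℝ 2 (volume.restrict Ω)) : Prop :=
  ∀ᵐ t ∂((volume.restrict Ω).restrict (Ω \ S)), x t = 0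

/-- `xdag` is an `x*`-`S`-minimum-norm solution of `F(x) = y`: it belongs to
`D(F)`, solves `F(xdag) = y`, vanishes a.e. on `Ω ∖ S`, and minimizes
`‖x − x*‖_{L²}` among all such solutions. -/
def IsMNS {n : ℕ} (Ω : Set (Fin n → ℝ)) {Y : Type*} [NormedAddCommGroup Y]
    [InnerProductSpace ℝ Y]
    (D : Set (Lp ℝ 2 (volume.restrict Ω))) (F : Lp ℝ 2 (volume.restrict Ω) → Y)
    (xstar : Lp ℝ 2 (volume.restrict Ω)) (S : Set (Fin n → ℝ)) (y : Y)
    (xdag : Lp ℝ 2 (volume.restrict Ω)) : Prop :=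
  xdag ∈ D ∧ F xdag = y ∧ ZeroOff Ω S xdag ∧
    ∀ x ∈ D, F x = y → ZeroOff Ω S x → ‖xdag - xstar‖ ≤ ‖x - xstar‖

theorem le_two_mul_add_sqrt_of_sq_le {a b c : ℝ} (hb : 0 ≤ b) (hc : 0 ≤ c)
    (h : a ^ 2 ≤ 2 * a * b + c) : a ≤ 2 * b + √c := by
  nlinarith [Real.sq_sqrt hc, Real.sqrt_nonneg c]

theorem norm_le_half_of_norm_deriv_le_mul {E : Type*} [NormedAddCommGroup E] [NormedSpace ℝ E]
    {f f' : ℝ → E} {K : ℝ}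
    (hf : ∀ t ∈ Set.Icc (0 : ℝ) 1, HasDerivWithinAt f (f' t) (Set.Icc 0 1) t)
    (h0 : f 0 = 0) (hf' : ∀ t ∈ Set.Ico (0 : ℝ) 1, ‖f' t‖ ≤ K * t) : ‖f 1‖ ≤ K / 2 := by
  have hB (t : ℝ) : HasDerivAt (fun t => K / 2 * t ^ 2) (K * t) t :=
    ((hasDerivAt_pow 2 t).const_mul (K / 2)).congr_deriv (by ring)
  have hcont : ContinuousOn f (Set.Icc 0 1) := fun t ht => (hf t ht).continuousWithinAt
  have hright (t : ℝ) (ht : t ∈ Set.Ico (0 : ℝ) 1) :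
      HasDerivWithinAt f (f' t) (Set.Ici t) t :=
    (hf t (Set.Ico_subset_Icc_self ht)).mono_of_mem_nhdsWithin
      (mem_of_superset (Icc_mem_nhdsGE ht.2) (Set.Icc_subset_Icc_left ht.1))
  simpa using image_norm_le_of_norm_deriv_right_le_deriv_boundary hcont hright
    (by simp [h0]) hB hf' (Set.right_mem_Icc.2 zero_le_one)

theorem Convex.norm_image_sub_sub_fderiv_le {X Y : Type*} [NormedAddCommGroup X]
    [NormedSpace ℝ X] [NormedAddCommGroup Y] [NormedSpace ℝ Y] {D : Set X} (hD : Convex ℝ D)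
    {F : X → Y} {F' : X → X →L[ℝ] Y} (hF : ∀ x ∈ D, HasFDerivWithinAt F (F' x) D x)
    {γ ρ : ℝ} {a b : X} (ha : a ∈ D) (hb : b ∈ D)
    (hF' : ∀ x ∈ D, ‖x - a‖ < ρ → ‖F' a - F' x‖ ≤ γ * ‖a - x‖) (hab : ‖b - a‖ < ρ) :
    ‖F b - F a - F' a (b - a)‖ ≤ γ / 2 * ‖b - a‖ ^ 2 := by
  set c := AffineMap.lineMap (k := ℝ) a b
  have hc : Set.MapsTo c (Set.Icc 0 1) D := fun t ht => hD.lineMap_mem ha hb ht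
  have hdist (t : ℝ) (ht : t ∈ Set.Ico (0 : ℝ) 1) : ‖c t - a‖ = t * ‖b - a‖ := by
    rw [← dist_eq_norm, dist_lineMap_left, Real.norm_of_nonneg ht.1, dist_eq_norm']
  have key := norm_le_half_of_norm_deriv_le_mul
    (f := fun t => F (c t) - F a - t • F' a (b - a))
    (f' := fun t => (F' (c t) - F' a) (b - a)) (K := γ * ‖b - a‖ ^ 2) ?_ (by simp [c]) ?_
  · simpa [c, mul_div_right_comm] using key
  · intro t ht
    have hFc := (hF _ (hc ht)).comp_hasDerivWithinAt t AffineMap.hasDerivWithinAt_lineMap hc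
    exact ((hFc.sub_const (F a)).sub ((hasDerivWithinAt_id t _).smul_const _)).congr_deriv
      (by simp)
  · intro t ht
    have hct : ‖c t - a‖ < ρ := by
      rw [hdist t ht]
      exact (mul_le_of_le_one_left (norm_nonneg _) ht.2.le).trans_lt hab
    calc ‖(F' (c t) - F' a) (b - a)‖ ≤ ‖F' (c t) - F' a‖ * ‖b - a‖ :=
          ContinuousLinearMap.le_opNorm _ _
      _ ≤ γ * ‖a - c t‖ * ‖b - a‖ := by
          rw [norm_sub_rev]
          gcongr
          exact hF' _ (hc (Set.Ico_subset_Icc_self ht)) hct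
      _ = γ * ‖b - a‖ ^ 2 * t := by
          rw [norm_sub_rev, hdist t ht]
          ring

theorem neg_inner_le_of_eq_adjoint {X Y : Type*} [NormedAddCommGroup X] [InnerProductSpace ℝ X]
    [CompleteSpace X] [NormedAddCommGroup Y] [InnerProductSpace ℝ Y] [CompleteSpace Y]
    {F : X → Y} {T : X →L[ℝ] Y} {w : X} {ω : Y} (hw : w = ContinuousLinearMap.adjoint T ω)
    {a b : X} {R : ℝ} (hR : ‖F b - F a - T (b - a)‖ ≤ R) :
    -⟪b - a, w⟫ ≤ ‖ω‖ * (‖F b - F a‖ + R) := by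
  have hT : ‖T (b - a)‖ ≤ ‖F b - F a‖ + R := by
    calc ‖T (b - a)‖ = ‖(F b - F a) - (F b - F a - T (b - a))‖ := by rw [sub_sub_cancel]
      _ ≤ ‖F b - F a‖ + R := (norm_sub_le _ _).trans (by gcongr)
  calc -⟪b - a, w⟫ = -⟪ω, T (b - a)⟫ := by
        rw [hw, ContinuousLinearMap.adjoint_inner_right, real_inner_comm]
    _ ≤ ‖ω‖ * ‖T (b - a)‖ := (neg_le_abs _).trans (abs_real_inner_le_norm _ _)
    _ ≤ ‖ω‖ * (‖F b - F a‖ + R) := by gcongr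

namespace MeasureTheory.L2

variable {α : Type*} [MeasurableSpace α] {μ : Measure α}

theorem real_inner_eq_integral (f g : Lp ℝ 2 μ) : ⟪f, g⟫ = ∫ t, f t * g t ∂μ := by
  simp [inner_def, mul_comm]

theorem integrable_mul (f g : Lp ℝ 2 μ) : Integrable (fun t => f t * g t) μ := by
  simpa [mul_comm] using integrable_inner (𝕜 := ℝ) f g

theorem norm_sq_eq_integral (f : Lp ℝ 2 μ) : ‖f‖ ^ 2 = ∫ t, f t ^ 2 ∂μ := by
  rw [← real_inner_self_eq_norm_sq, real_inner_eq_integral]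
  simp only [sq]

theorem setIntegral_sq_add_setIntegral_sq_compl {S : Set α} (hS : MeasurableSet S)
    (f : Lp ℝ 2 μ) : ∫ t in S, f t ^ 2 ∂μ + ∫ t in Sᶜ, f t ^ 2 ∂μ = ‖f‖ ^ 2 := by
  rw [norm_sq_eq_integral, integral_add_compl hS]
  simpa [sq] using integrable_mul f f

theorem setIntegral_mul_eq_inner {S : Set α} (hS : MeasurableSet S) (f : Lp ℝ 2 μ)
    {g : Lp ℝ 2 μ} (hg : ∀ᵐ t ∂μ.restrict Sᶜ, g t = 0) :
    ∫ t in S, f t * g t ∂μ = ⟪f, g⟫ := by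
  have hcompl : ∫ t in Sᶜ, f t * g t ∂μ = 0 :=
    integral_eq_zero_of_ae (by filter_upwards [hg] with t ht; simp [ht])
  rw [real_inner_eq_integral, ← integral_add_compl hS (integrable_mul f g), hcompl, add_zero]

theorem setIntegral_add_sq (T : Set α) (f g : Lp ℝ 2 μ) :
    ∫ t in T, (f + g) t ^ 2 ∂μ
      = ∫ t in T, f t ^ 2 ∂μ + 2 * ∫ t in T, f t * g t ∂μ + ∫ t in T, g t ^ 2 ∂μ := by
  have hexpand : ∀ᵐ t ∂μ.restrict T, (f + g) t ^ 2 = f t ^ 2 + 2 * (f t * g t) + g t ^ 2 := by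
    filter_upwards [ae_restrict_of_ae (Lp.coeFn_add f g)] with t ht
    rw [ht, Pi.add_apply]; ring
  have hf : Integrable (fun t => f t ^ 2) (μ.restrict T) := by
    simpa [sq] using (integrable_mul f f).restrict
  have hg : Integrable (fun t => g t ^ 2) (μ.restrict T) := by
    simpa [sq] using (integrable_mul g g).restrict
  have hfg : Integrable (fun t => 2 * (f t * g t)) (μ.restrict T) :=
    (integrable_mul f g).restrict.const_mul 2
  have hf_fg : Integrable (fun t => f t ^ 2 + 2 * (f t * g t)) (μ.restrict T) := hf.add hfg
  rw [integral_congr_ae hexpand, integral_add hf_fg hg, integral_add hf hfg,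
    integral_const_mul]

end MeasureTheory.L2

theorem MeasureTheory.Measure.restrict_restrict_diff_eq_restrict_compl {α : Type*}
    [MeasurableSpace α] (μ : Measure α) {Ω : Set α} (hΩ : MeasurableSet Ω) (S : Set α) :
    (μ.restrict Ω).restrict (Ω \ S) = (μ.restrict Ω).restrict Sᶜ := by
  rw [Measure.restrict_restrict' hΩ, Measure.restrict_restrict' hΩ, Set.sdiff_eq, Set.inter_comm Ω,
    Set.inter_assoc, Set.inter_self]

local notation "L²[" Ω "]" => Lp ℝ 2 (volume.restrict Ω)

section sqInt

variable {n : ℕ} {Ω S : Set (Fin n → ℝ)}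

theorem sqInt_nonneg (T : Set (Fin n → ℝ)) (x : L²[Ω]) : 0 ≤ sqInt Ω T x :=
  integral_nonneg fun _ => sq_nonneg _

theorem sqInt_zero (T : Set (Fin n → ℝ)) : sqInt Ω T 0 = 0 :=
  integral_eq_zero_of_ae <| by
    filter_upwards [ae_restrict_of_ae (Lp.coeFn_zero ℝ 2 (volume.restrict Ω))] with t ht
    rw [ht, Pi.zero_apply, sq, mul_zero]

theorem sqInt_add_sqInt_diff (hΩ : MeasurableSet Ω) (hS : MeasurableSet S) (x : L²[Ω]) :
    sqInt Ω S x + sqInt Ω (Ω \ S) x = ‖x‖ ^ 2 := by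
  unfold sqInt
  rw [Measure.restrict_restrict_diff_eq_restrict_compl _ hΩ]
  exact L2.setIntegral_sq_add_setIntegral_sq_compl hS x

theorem ZeroOff.sub {x x' : L²[Ω]} (hx : ZeroOff Ω S x) (hx' : ZeroOff Ω S x') :
    ZeroOff Ω S (x - x') := by
  filter_upwards [ae_restrict_of_ae (Lp.coeFn_sub x x'), hx, hx'] with t ht h h'
  rw [ht, Pi.sub_apply, h, h', sub_zero]

theorem ZeroOff.sqInt_diff_add {w : L²[Ω]} (hw : ZeroOff Ω S w) (v : L²[Ω]) :
    sqInt Ω (Ω \ S) (v + w) = sqInt Ω (Ω \ S) v :=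
  integral_congr_ae <| by
    filter_upwards [ae_restrict_of_ae (Lp.coeFn_add v w), hw] with t ht h
    rw [ht, Pi.add_apply, h, add_zero]

theorem ZeroOff.sqInt_add (hΩ : MeasurableSet Ω) (hS : MeasurableSet S) {w : L²[Ω]}
    (hw : ZeroOff Ω S w) (v : L²[Ω]) :
    sqInt Ω S (v + w) = sqInt Ω S v + 2 * ⟪v, w⟫ + ‖w‖ ^ 2 := by
  rw [ZeroOff, Measure.restrict_restrict_diff_eq_restrict_compl _ hΩ] at hw
  have hwS : sqInt Ω S w = ‖w‖ ^ 2 := by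
    rw [sqInt, ← L2.setIntegral_sq_add_setIntegral_sq_compl hS w, left_eq_add]
    exact integral_eq_zero_of_ae (by filter_upwards [hw] with t ht; simp [ht])
  rw [← hwS]
  unfold sqInt
  rw [L2.setIntegral_add_sq, L2.setIntegral_mul_eq_inner hS v hw]

end sqInt

section Tikhonov

variable {n : ℕ} {Ω S : Set (Fin n → ℝ)} {Y : Type*} [NormedAddCommGroup Y]
  [InnerProductSpace ℝ Y] {F : L²[Ω] → Y} {xstar xdag : L²[Ω]}

theorem J_eq_of_zeroOff (hΩ : MeasurableSet Ω) (hS : MeasurableSet S)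
    (hw : ZeroOff Ω S (xdag - xstar)) (α : ℝ) (z : Y) (x : L²[Ω]) :
    J Ω F xstar α S z x = ‖F x - z‖ ^ 2
      + α * (sqInt Ω S (x - xdag) + 2 * ⟪x - xdag, xdag - xstar⟫ + ‖xdag - xstar‖ ^ 2)
      + sqInt Ω (Ω \ S) (x - xdag) := by
  have hsplit : x - xstar = (x - xdag) + (xdag - xstar) := by abel
  rw [J, hsplit, hw.sqInt_add hΩ hS, hw.sqInt_diff_add]
  ring

theorem J_self_eq_of_zeroOff (hΩ : MeasurableSet Ω) (hS : MeasurableSet S)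
    (hw : ZeroOff Ω S (xdag - xstar)) (α : ℝ) (z : Y) :
    J Ω F xstar α S z xdag = ‖F xdag - z‖ ^ 2 + α * ‖xdag - xstar‖ ^ 2 := by
  rw [J_eq_of_zeroOff hΩ hS hw, sub_self, sqInt_zero, sqInt_zero, inner_zero_left]
  ring

variable {D : Set L²[Ω]} {α : ℝ} {z : Y} {x : L²[Ω]}

theorem IsMinimizer.sqInt_add_inner_le (hmin : IsMinimizer (J Ω F xstar α S z) D x)
    (hΩ : MeasurableSet Ω) (hS : MeasurableSet S) (hw : ZeroOff Ω S (xdag - xstar))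
    (hxdag : xdag ∈ D) :
    ‖F x - z‖ ^ 2 + α * sqInt Ω S (x - xdag) + sqInt Ω (Ω \ S) (x - xdag)
      + 2 * α * ⟪x - xdag, xdag - xstar⟫ ≤ ‖F xdag - z‖ ^ 2 := by
  have h := hmin.2 xdag hxdag
  rw [J_eq_of_zeroOff hΩ hS hw, J_self_eq_of_zeroOff hΩ hS hw] at h
  linarith

theorem IsMinimizer.norm_sub_le (hmin : IsMinimizer (J Ω F xstar α S z) D x)
    (hΩ : MeasurableSet Ω) (hS : MeasurableSet S) (hw : ZeroOff Ω S (xdag - xstar))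
    (hxdag : xdag ∈ D) (hα : 0 < α) (hα1 : α ≤ 1) (hz : ‖F xdag - z‖ ≤ α) :
    ‖x - xdag‖ ≤ 2 * ‖xdag - xstar‖ + √α := by
  have hbasic := hmin.sqInt_add_inner_le hΩ hS hw hxdag
  have hsplit := sqInt_add_sqInt_diff hΩ hS (x - xdag)
  have hcs := neg_le_of_abs_le (abs_real_inner_le_norm (x - xdag) (xdag - xstar))
  have hz2 : ‖F xdag - z‖ ^ 2 ≤ α ^ 2 := by gcongr
  have hdiff := sqInt_nonneg (Ω \ S) (x - xdag)
  have h : α * ‖x - xdag‖ ^ 2 ≤ α * (2 * ‖x - xdag‖ * ‖xdag - xstar‖ + α) := by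
    nlinarith [sq_nonneg ‖F x - z‖]
  exact le_two_mul_add_sqrt_of_sq_le (norm_nonneg _) hα.le (le_of_mul_le_mul_left h hα)

end Tikhonov

theorem rate_ineq_of_source_condition {δ A B τ e I ν γ : ℝ} (hδ : 0 < δ) (hδ1 : δ ≤ 1)
    (hν : 0 ≤ ν) (hγ : 0 ≤ γ) (hB : 0 ≤ B)
    (hbasic : τ ^ 2 + δ * A + B + 2 * δ * I ≤ δ ^ 2) (he : e ≤ τ + δ)
    (hI : -I ≤ ν * (e + γ / 2 * (A + B))) :
    (τ - δ * ν) ^ 2 + (1 - γ * ν) * (δ * A + B) ≤ (δ * (1 + ν)) ^ 2 := by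
  have hI' : -I ≤ ν * (τ + δ + γ / 2 * (A + B)) := hI.trans (by gcongr)
  have hδI := mul_le_mul_of_nonneg_left hI' (by positivity : (0 : ℝ) ≤ 2 * δ)
  have hBterm : 0 ≤ (1 - δ) * (γ * ν) * B := by
    have := sub_nonneg.2 hδ1
    positivity
  nlinarith

theorem rates_of_rate_ineq {δ A B τ ν s : ℝ} (hδ : 0 < δ) (hν : 0 ≤ ν) (hs : 0 < s)
    (hs1 : s ≤ 1) (hA : 0 ≤ A) (hB : 0 ≤ B)
    (h : (τ - δ * ν) ^ 2 + s ^ 2 * (δ * A + B) ≤ (δ * (1 + ν)) ^ 2) :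
    √A ≤ 2 * (1 + ν) / s * √δ ∧ √B ≤ 2 * (1 + ν) / s * δ ∧
      τ + δ ≤ 2 * (1 + ν) / s * δ := by
  have hC : 2 * (1 + ν) ≤ 2 * (1 + ν) / s := le_div_self (by positivity) hs hs1
  have hsA : s ^ 2 * A ≤ δ * (1 + ν) ^ 2 := by
    nlinarith [sq_nonneg (τ - δ * ν), mul_nonneg (sq_nonneg s) hB]
  have hsB : s ^ 2 * B ≤ (δ * (1 + ν)) ^ 2 := by
    nlinarith [sq_nonneg (τ - δ * ν), mul_nonneg (sq_nonneg s) (mul_nonneg hδ.le hA)]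
  have hsq : (τ - δ * ν) ^ 2 ≤ (δ * (1 + ν)) ^ 2 := by
    nlinarith [mul_nonneg (sq_nonneg s) (add_nonneg (mul_nonneg hδ.le hA) hB)]
  have hτ : τ - δ * ν ≤ δ * (1 + ν) := (abs_le_of_sq_le_sq' hsq (by positivity)).2
  refine ⟨?_, ?_, ?_⟩
  · rw [Real.sqrt_le_left (by positivity), mul_pow, div_pow, Real.sq_sqrt hδ.le,
      div_mul_eq_mul_div, le_div_iff₀ (by positivity)]
    nlinarith
  · rw [Real.sqrt_le_left (by positivity), mul_pow, div_pow, div_mul_eq_mul_div,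
      le_div_iff₀ (by positivity)]
    nlinarith
  · nlinarith

theorem convergence_rate_general
    {n : ℕ} (Ω : Set (Fin n → ℝ)) (hΩmeas : MeasurableSet Ω)
    {Y : Type*} [NormedAddCommGroup Y] [InnerProductSpace ℝ Y] [CompleteSpace Y]
    (D : Set (Lp ℝ 2 (volume.restrict Ω)))
    (hDconv : Convex ℝ D)
    (F : Lp ℝ 2 (volume.restrict Ω) → Y)
    (xstar : Lp ℝ 2 (volume.restrict Ω))
    (S : Set (Fin n → ℝ)) (hSmeas : MeasurableSet S)
    (hxstar : ZeroOff Ω S xstar)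
    (y : Y)
    (xdag : Lp ℝ 2 (volume.restrict Ω)) (hxdag : IsMNS Ω D F xstar S y xdag)
    (F' : Lp ℝ 2 (volume.restrict Ω) → (Lp ℝ 2 (volume.restrict Ω) →L[ℝ] Y))
    (hFderiv : ∀ x ∈ D, HasFDerivWithinAt F (F' x) D x)
    (γ : ℝ) (hγ : 0 ≤ γ) (ρ : ℝ) (hρ : 2 * ‖xdag - xstar‖ < ρ)
    (hLip : ∀ x ∈ D, ‖x - xdag‖ < ρ → ‖F' xdag - F' x‖ ≤ γ * ‖xdag - x‖)
    (ω : Y) (hω : xdag - xstar = ContinuousLinearMap.adjoint (F' xdag) ω)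
    (hsmall : γ * ‖ω‖ < 1) :
    ∃ C > (0 : ℝ), ∃ δ₀ > (0 : ℝ), ∀ δ : ℝ, 0 < δ → δ ≤ δ₀ →
      ∀ yδ : Y, ‖y - yδ‖ ≤ δ →
        ∀ xδ : Lp ℝ 2 (volume.restrict Ω),
          IsMinimizer (J Ω F xstar δ S yδ) D xδ →
            Real.sqrt (sqInt Ω S (xδ - xdag)) ≤ C * Real.sqrt δ ∧
            Real.sqrt (sqInt Ω (Ω \ S) (xδ - xdag)) ≤ C * δ ∧
            ‖F xδ - y‖ ≤ C * δ := by
  obtain ⟨hxdagD, rfl, hxdag0, -⟩ := hxdag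
  have hw : ZeroOff Ω S (xdag - xstar) := hxdag0.sub hxstar
  have hκ : 0 < 1 - γ * ‖ω‖ := sub_pos.2 hsmall
  have hs : √(1 - γ * ‖ω‖) ≤ 1 :=
    Real.sqrt_le_one.2 (sub_le_self _ (mul_nonneg hγ (norm_nonneg ω)))
  refine ⟨2 * (1 + ‖ω‖) / √(1 - γ * ‖ω‖), by positivity,
    min 1 (((ρ - 2 * ‖xdag - xstar‖) / 2) ^ 2), lt_min one_pos (by nlinarith), ?_⟩
  intro δ hδ hδ₀ yδ hyδ xδ hmin
  have hδ1 : δ ≤ 1 := hδ₀.trans (min_le_left _ _)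
  have hnear : ‖xδ - xdag‖ < ρ := by
    have hsqrt : √δ ≤ (ρ - 2 * ‖xdag - xstar‖) / 2 :=
      (Real.sqrt_le_left (by linarith)).2 (hδ₀.trans (min_le_right _ _))
    linarith [hmin.norm_sub_le hΩmeas hSmeas hw hxdagD hδ hδ1 hyδ]
  have hsource := neg_inner_le_of_eq_adjoint hω
    (hDconv.norm_image_sub_sub_fderiv_le hFderiv hxdagD hmin.1 hLip hnear)
  have hFy : ‖F xδ - F xdag‖ ≤ ‖F xδ - yδ‖ + δ :=
    (norm_sub_le_norm_sub_add_norm_sub _ yδ _).trans (by rw [norm_sub_rev yδ]; gcongr)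
  have hbasic := (hmin.sqInt_add_inner_le hΩmeas hSmeas hw hxdagD).trans
    (pow_le_pow_left₀ (norm_nonneg _) hyδ 2)
  rw [← sqInt_add_sqInt_diff hΩmeas hSmeas] at hsource
  have hrate := rate_ineq_of_source_condition hδ hδ1 (norm_nonneg ω) hγ
    (sqInt_nonneg _ _) hbasic hFy hsource
  rw [← Real.sq_sqrt hκ.le] at hrate
  obtain ⟨hA, hB, hτ⟩ := rates_of_rate_ineq hδ (norm_nonneg ω) (Real.sqrt_pos.2 hκ) hs
    (sqInt_nonneg _ _) (sqInt_nonneg _ _) hrate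
  exact ⟨hA, hB, hFy.trans hτ⟩

/-- **Convergence rate** (Theorem A.4): under convexity of `D(F)`, Fréchet
differentiability of `F`, a Lipschitz bound on the derivative in the ball of
radius `ρ > 2‖x† − x*‖` around the `x*`-`S`-minimum-norm solution `x†`, the
source condition `x† − x* = F'(x†)*ω`, and `γ‖ω‖ < 1`, the parameter choice
`α(δ) = δ` yields, for all sufficiently small `δ > 0`, the rates
`‖x^δ − x†‖_{S⁺} = O(√δ)`, `‖x^δ − x†‖_{S⁻} = O(δ)` and
`‖F(x^δ) − y‖ = O(δ)` for every minimizer `x^δ` of `J_{δ,S,y^δ}`. -/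
theorem convergence_rate
    {n : ℕ} (Ω : Set (Fin n → ℝ)) (hΩmeas : MeasurableSet Ω)
    (hΩbdd : Bornology.IsBounded Ω)
    {Y : Type*} [NormedAddCommGroup Y] [InnerProductSpace ℝ Y] [CompleteSpace Y]
    (D : Set (Lp ℝ 2 (volume.restrict Ω))) (hD : D.Nonempty)
    (hDconv : Convex ℝ D)
    (F : Lp ℝ 2 (volume.restrict Ω) → Y)
    (hFcont : ContinuousOn F D)
    (hFweak : ∀ (u : ℕ → Lp ℝ 2 (volume.restrict Ω))
      (x : Lp ℝ 2 (volume.restrict Ω)) (z : Y),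
      (∀ k, u k ∈ D) → WeakConv u x → WeakConv (fun k => F (u k)) z →
        x ∈ D ∧ F x = z)
    (xstar : Lp ℝ 2 (volume.restrict Ω))
    (S : Set (Fin n → ℝ)) (hSmeas : MeasurableSet S) (hSΩ : S ⊆ Ω)
    (hxstar : ZeroOff Ω S xstar)
    (y : Y)
    (xdag : Lp ℝ 2 (volume.restrict Ω)) (hxdag : IsMNS Ω D F xstar S y xdag)
    (F' : Lp ℝ 2 (volume.restrict Ω) → (Lp ℝ 2 (volume.restrict Ω) →L[ℝ] Y))
    (hFderiv : ∀ x ∈ D, HasFDerivWithinAt F (F' x) D x)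
    (γ : ℝ) (hγ : 0 ≤ γ) (ρ : ℝ) (hρ : 2 * ‖xdag - xstar‖ < ρ)
    (hLip : ∀ x ∈ D, ‖x - xdag‖ < ρ → ‖F' xdag - F' x‖ ≤ γ * ‖xdag - x‖)
    (ω : Y) (hω : xdag - xstar = ContinuousLinearMap.adjoint (F' xdag) ω)
    (hsmall : γ * ‖ω‖ < 1) :
    ∃ C > (0 : ℝ), ∃ δ₀ > (0 : ℝ), ∀ δ : ℝ, 0 < δ → δ ≤ δ₀ →
      ∀ yδ : Y, ‖y - yδ‖ ≤ δ →
        ∀ xδ : Lp ℝ 2 (volume.restrict Ω),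
          IsMinimizer (J Ω F xstar δ S yδ) D xδ →
            Real.sqrt (sqInt Ω S (xδ - xdag)) ≤ C * Real.sqrt δ ∧
            Real.sqrt (sqInt Ω (Ω \ S) (xδ - xdag)) ≤ C * δ ∧
            ‖F xδ - y‖ ≤ C * δ :=
  convergence_rate_general Ω hΩmeas D hDconv F xstar S hSmeas hxstar y xdag hxdag F' hFderiv γ hγ ρ
    hρ hLip ω hω hsmall
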